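/- Let l be a symmetric loss (Σ_{y=1}^C l(z,y) = K constant in z) and let g : ℝ^C → ℝ be a regularizer. Set a = 1 − ρC/(C−1) > 0 and λ = 1/a. Then for any set 𝒵 of random variables f(X) (f measurable) on which all expectations below are finite, argmin_{Z∈𝒵} ( E[l(Z,Ȳ)] + E[g(Z)] ) ⊆ argmin_{Z∈𝒵} ( E[l(Z,Y)] + λ·E[g(Z)] ). -/

import Mathlib

/-!
By symmetry of the loss, the off-diagonal part of the noise contributes `K - l(Z, Y)`, so the
noisy risk is `a · E[l(Z,Y)] + ρK/(C-1)`. Hence `E[l(Z,Ȳ)] + E[g(Z)]` is `a · (E[l(Z,Y)] + λ E[g(Z)])`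
plus a constant, and since `a > 0` both have the same minimizers.
-/

open MeasureTheory

/-- `Ybar` is a uniformly noisy version of `Y` at noise level `ρ` (expectation form of
`P(Ȳ=i | Y,X) = ρ/(C−1)` for `i ≠ Y` and `1−ρ` for `i = Y`). -/
def UniformLabelNoise {Ω 𝒳 : Type*} [MeasurableSpace Ω] (P : Measure Ω) (C : ℕ) (ρ : ℝ)
    (X : Ω → 𝒳) (Y Ybar : Ω → Fin C) : Prop :=
  ∀ h : 𝒳 → Fin C → ℝ,
    Integrable (fun ω => h (X ω) (Ybar ω)) P →
    Integrable (fun ω => h (X ω) (Y ω)) P →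
    (∀ i, Integrable (fun ω => h (X ω) i) P) →
    ∫ ω, h (X ω) (Ybar ω) ∂P =
      (1 - ρ) * ∫ ω, h (X ω) (Y ω) ∂P
        + (ρ / ((C : ℝ) - 1)) * ∫ ω, (∑ i : Fin C, if i = Y ω then 0 else h (X ω) i) ∂P

theorem Fintype.sum_ite_eq_zero_eq_sub {ι M : Type*} [Fintype ι] [DecidableEq ι] [AddCommGroup M]
    (f : ι → M) (j : ι) : ∑ i, (if i = j then 0 else f i) = ∑ i, f i - f j := by
  simp only [Finset.sum_ite, Finset.sum_const_zero, Finset.filter_ne', Finset.mem_univ,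
    Finset.sum_erase_eq_sub, zero_add]

theorem UniformLabelNoise.integral_eq_of_sum_eq {Ω 𝒳 : Type*} [MeasurableSpace Ω]
    {P : Measure Ω} [IsProbabilityMeasure P] {C : ℕ} (hC : 2 ≤ C) {ρ : ℝ}
    {X : Ω → 𝒳} {Y Ybar : Ω → Fin C} (hnoise : UniformLabelNoise P C ρ X Y Ybar)
    {h : 𝒳 → Fin C → ℝ} {K : ℝ} (hsym : ∀ x, ∑ y, h x y = K)
    (hbar : Integrable (fun ω => h (X ω) (Ybar ω)) P)
    (hclean : Integrable (fun ω => h (X ω) (Y ω)) P)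
    (hall : ∀ i, Integrable (fun ω => h (X ω) i) P) :
    ∫ ω, h (X ω) (Ybar ω) ∂P =
      (1 - ρ * C / ((C : ℝ) - 1)) * ∫ ω, h (X ω) (Y ω) ∂P + ρ / ((C : ℝ) - 1) * K := by
  have hC1 : (C : ℝ) - 1 ≠ 0 := by
    have : (2 : ℝ) ≤ C := by exact_mod_cast hC
    linarith
  have hoff_diag : ∫ ω, (∑ i, if i = Y ω then 0 else h (X ω) i) ∂P
      = K - ∫ ω, h (X ω) (Y ω) ∂P := by
    simp_rw [Fintype.sum_ite_eq_zero_eq_sub, hsym]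
    rw [integral_sub (integrable_const K) hclean, integral_const, probReal_univ, one_smul]
  rw [hnoise h hbar hclean hall, hoff_diag]
  field_simp
  ring

theorem IsMinOn.of_eq_mul_add {α : Type*} {s : Set α} {F G : α → ℝ} {a c : ℝ} (ha : 0 < a)
    (hFG : ∀ z ∈ s, F z = a * G z + c) {x : α} (hxs : x ∈ s) (hx : IsMinOn F s x) :
    IsMinOn G s x := fun z hz => by
  have := isMinOn_iff.mp hx z hz
  rw [hFG x hxs, hFG z hz] at this
  exact le_of_mul_le_mul_left (by linarith) ha

theorem stmt3_general
    {Ω 𝒳 : Type*} [MeasurableSpace Ω] [MeasurableSpace 𝒳]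
    (P : Measure Ω) [IsProbabilityMeasure P]
    (C : ℕ) (hC : 2 ≤ C) (ρ : ℝ)
    (X : Ω → 𝒳) (Y Ybar : Ω → Fin C)
    (hnoise : UniformLabelNoise P C ρ X Y Ybar)
    (l : (Fin C → ℝ) → Fin C → ℝ) (K : ℝ)
    (hsym : ∀ z, ∑ y : Fin C, l z y = K)
    (g : (Fin C → ℝ) → ℝ)
    (a lam : ℝ) (ha : a = 1 - ρ * C / ((C : ℝ) - 1)) (ha0 : 0 < a) (hlam : lam = 1 / a)
    (𝒵 : Set (Ω → Fin C → ℝ))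
    (h𝒵 : ∀ Z ∈ 𝒵, ∃ f : 𝒳 → Fin C → ℝ, Measurable f ∧ Z = fun ω => f (X ω))
    (hint1 : ∀ Z ∈ 𝒵, Integrable (fun ω => l (Z ω) (Ybar ω)) P)
    (hint2 : ∀ Z ∈ 𝒵, Integrable (fun ω => l (Z ω) (Y ω)) P)
    (hint3 : ∀ Z ∈ 𝒵, ∀ i, Integrable (fun ω => l (Z ω) i) P) :
    ∀ Zbar ∈ 𝒵,
      (∀ W ∈ 𝒵,
        (∫ ω, l (Zbar ω) (Ybar ω) ∂P) + ∫ ω, g (Zbar ω) ∂P ≤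
          (∫ ω, l (W ω) (Ybar ω) ∂P) + ∫ ω, g (W ω) ∂P) →
      (∀ W ∈ 𝒵,
        (∫ ω, l (Zbar ω) (Y ω) ∂P) + lam * ∫ ω, g (Zbar ω) ∂P ≤
          (∫ ω, l (W ω) (Y ω) ∂P) + lam * ∫ ω, g (W ω) ∂P) := by
  have hnoisy_risk : ∀ Z ∈ 𝒵, (∫ ω, l (Z ω) (Ybar ω) ∂P) + ∫ ω, g (Z ω) ∂P =
      a * ((∫ ω, l (Z ω) (Y ω) ∂P) + lam * ∫ ω, g (Z ω) ∂P) + ρ / ((C : ℝ) - 1) * K := by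
    intro Z hZ
    obtain ⟨f, -, rfl⟩ := h𝒵 Z hZ
    rw [hnoise.integral_eq_of_sum_eq hC (fun x => hsym (f x)) (hint1 _ hZ) (hint2 _ hZ)
      (hint3 _ hZ), ← ha, hlam]
    field_simp
    ring
  intro Zbar hZbar hmin
  exact isMinOn_iff.mp (IsMinOn.of_eq_mul_add ha0 hnoisy_risk hZbar (isMinOn_iff.mpr hmin))

/-- Lemma 1 of the paper: for a symmetric loss `l`, a regularizer `g` (unique minimum
at `0`), `a = 1 − ρC/(C−1) > 0` and `λ = 1/a`, every minimizer over `𝒵` of the noisy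
regularized risk `E[l(Z,Ȳ)] + E[g(Z)]` is a minimizer of the clean regularized risk
`E[l(Z,Y)] + λ·E[g(Z)]`. -/
theorem stmt3
    {Ω 𝒳 : Type*} [MeasurableSpace Ω] [MeasurableSpace 𝒳]
    (P : Measure Ω) [IsProbabilityMeasure P]
    (C : ℕ) (hC : 2 ≤ C) (ρ : ℝ) (hρ0 : 0 ≤ ρ) (hρ : ρ < ((C : ℝ) - 1) / C)
    (X : Ω → 𝒳) (Y Ybar : Ω → Fin C)
    (hX : Measurable X) (hY : Measurable Y) (hYbar : Measurable Ybar)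
    (hnoise : UniformLabelNoise P C ρ X Y Ybar)
    (l : (Fin C → ℝ) → Fin C → ℝ) (K : ℝ)
    (hsym : ∀ z, ∑ y : Fin C, l z y = K)
    (g : (Fin C → ℝ) → ℝ) (hreg : ∀ z, z ≠ 0 → g 0 < g z)
    (a lam : ℝ) (ha : a = 1 - ρ * C / ((C : ℝ) - 1)) (ha0 : 0 < a) (hlam : lam = 1 / a)
    (𝒵 : Set (Ω → Fin C → ℝ))
    (h𝒵 : ∀ Z ∈ 𝒵, ∃ f : 𝒳 → Fin C → ℝ, Measurable f ∧ Z = fun ω => f (X ω))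
    (hint1 : ∀ Z ∈ 𝒵, Integrable (fun ω => l (Z ω) (Ybar ω)) P)
    (hint2 : ∀ Z ∈ 𝒵, Integrable (fun ω => l (Z ω) (Y ω)) P)
    (hint3 : ∀ Z ∈ 𝒵, ∀ i, Integrable (fun ω => l (Z ω) i) P)
    (hint4 : ∀ Z ∈ 𝒵, Integrable (fun ω => g (Z ω)) P) :
    ∀ Zbar ∈ 𝒵,
      (∀ W ∈ 𝒵,
        (∫ ω, l (Zbar ω) (Ybar ω) ∂P) + ∫ ω, g (Zbar ω) ∂P ≤
          (∫ ω, l (W ω) (Ybar ω) ∂P) + ∫ ω, g (W ω) ∂P) →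
      (∀ W ∈ 𝒵,
        (∫ ω, l (Zbar ω) (Y ω) ∂P) + lam * ∫ ω, g (Zbar ω) ∂P ≤
          (∫ ω, l (W ω) (Y ω) ∂P) + lam * ∫ ω, g (W ω) ∂P) :=
  stmt3_general P C hC ρ X Y Ybar hnoise l K hsym g a lam ha ha0 hlam 𝒵 h𝒵 hint1 hint2 hint3
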